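/- Let φ be the ℂ-algebra endomorphism of ℂ[x,y] determined by φ(x) = x and φ(y) = (y + g(x))·f(x), where g is a one-variable polynomial and f is a non-constant one-variable polynomial. If a polynomial p ∈ ℂ[x,y] satisfies φ(p) = p, then p ∈ ℂ[x], i.e., p is a polynomial in x alone. -/
import Mathlib


open MvPolynomial

/-- `ℂ[x,y]` as multivariate polynomials in two variables. -/
local notation "P" => MvPolynomial (Fin 2) ℂ

/-- Let `φ` be the `ℂ`-algebra endomorphism of `ℂ[x,y]` with `φ(x) = x` and
`φ(y) = (y + g(x))·f(x)`, where `g` is a one-variable polynomial and `f` is a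
non-constant one-variable polynomial.  If `φ(p) = p`, then `p ∈ ℂ[x]`. -/
noncomputable def psi : P →ₐ[ℂ] Polynomial (Polynomial ℂ) :=
  aeval ![Polynomial.C Polynomial.X, Polynomial.X]

noncomputable def rho : Polynomial (Polynomial ℂ) →ₐ[ℂ] P :=
  Polynomial.aevalTower (Polynomial.aeval (X 0 : P)) (X 1)

lemma rho_comp_psi : rho.comp psi = AlgHom.id ℂ P := by
  apply MvPolynomial.algHom_ext
  intro i
  fin_cases i <;>
    simp [psi, rho, Matrix.cons_val_zero, Matrix.cons_val_one]

lemma psi_aeval_X0 (q : Polynomial ℂ) :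
    (aeval ![Polynomial.C Polynomial.X, Polynomial.X] : P →ₐ[ℂ] Polynomial (Polynomial ℂ))
      (Polynomial.aeval (X 0 : P) q) = Polynomial.C q := by
  rw [← Polynomial.aeval_algHom_apply]
  have h0 : (aeval ![Polynomial.C Polynomial.X, Polynomial.X] : P →ₐ[ℂ] Polynomial (Polynomial ℂ))
      (X 0) = Polynomial.C Polynomial.X := by simp
  rw [h0,
    show (Polynomial.C Polynomial.X : Polynomial (Polynomial ℂ)) =
      (Polynomial.CAlgHom : Polynomial ℂ →ₐ[ℂ] Polynomial (Polynomial ℂ)) Polynomial.X from rfl,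
    Polynomial.aeval_algHom_apply]
  simp [Polynomial.aeval_X_left_apply, Polynomial.CAlgHom]

lemma psi_comm (f g : Polynomial ℂ) :
    psi.comp (aeval
      ![(X 0 : P),
        ((X 1 : P) + Polynomial.aeval (X 0 : P) g) * Polynomial.aeval (X 0 : P) f]) =
    ((Polynomial.aeval ((Polynomial.X + Polynomial.C g) * Polynomial.C f)).restrictScalars
        ℂ).comp psi := by
  apply MvPolynomial.algHom_ext
  intro i
  fin_cases i
  · simp [psi, Matrix.cons_val_zero]
  · show psi ((aeval _) (X 1)) = _
    simp only [AlgHom.coe_comp, Function.comp_apply, aeval_X, Matrix.cons_val_one,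
      Matrix.head_cons, AlgHom.coe_restrictScalars]
    show _ = (Polynomial.aeval _) (psi (X 1))
    simp only [map_mul, map_add, psi, aeval_X, Matrix.cons_val_one, Matrix.head_cons,
      Matrix.cons_val_zero, Polynomial.aeval_X, Polynomial.aeval_C]
    rw [psi_aeval_X0, psi_aeval_X0]

theorem fixed_by_triangular_is_in_Cx (f g : Polynomial ℂ)
    (hf : f.natDegree ≠ 0) (p : P)
    (hfix : aeval
        ![(X 0 : P),
          ((X 1 : P) + Polynomial.aeval (X 0 : P) g) * Polynomial.aeval (X 0 : P) f]
        p = p) :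
    p ∈ Algebra.adjoin ℂ ({X 0} : Set P) := by
  have hf0 : f ≠ 0 := fun h => hf (by simp [h])
  set u : Polynomial (Polynomial ℂ) :=
    (Polynomial.X + Polynomial.C g) * Polynomial.C f with hu
  set q : Polynomial (Polynomial ℂ) := psi p with hq
  -- transport the fixed point equation
  have key : q.comp u = q := by
    have h1 := congrArg psi hfix
    have h2 := congrFun (congrArg DFunLike.coe (psi_comm f g)) p
    simp only [AlgHom.coe_comp, Function.comp_apply, AlgHom.coe_restrictScalars] at h2
    rw [h2] at h1
    rwa [Polynomial.comp_eq_aeval]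
  -- degree facts about u
  have hXg : (Polynomial.X + Polynomial.C g).Monic := Polynomial.monic_X_add_C g
  have hdu : u.natDegree = 1 := by
    rw [hu, Polynomial.natDegree_mul hXg.ne_zero (by simpa using hf0)]
    simp [Polynomial.natDegree_X_add_C]
  have hlu : u.leadingCoeff = f := by
    rw [hu, Polynomial.leadingCoeff_mul, hXg.leadingCoeff, one_mul,
      Polynomial.leadingCoeff_C]
  -- q has natDegree 0
  have hdq : q.natDegree = 0 := by
    by_contra hd
    have hqne : q ≠ 0 := fun h => hd (by simp [h])
    have hlc : (q.comp u).leadingCoeff = q.leadingCoeff * u.leadingCoeff ^ q.natDegree :=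
      Polynomial.leadingCoeff_comp (by omega)
    rw [key, hlu] at hlc
    have hfq : f ^ q.natDegree = 1 := by
      have h' : q.leadingCoeff * 1 = q.leadingCoeff * f ^ q.natDegree := by
        rw [mul_one]; exact hlc
      exact (mul_left_cancel₀ (Polynomial.leadingCoeff_ne_zero.mpr hqne) h').symm
    have : q.natDegree * f.natDegree = 0 := by
      have := congrArg Polynomial.natDegree hfq
      rwa [Polynomial.natDegree_pow, Polynomial.natDegree_one] at this
    exact absurd this (by positivity)
  -- conclude
  have hqC : q = Polynomial.C (q.coeff 0) := Polynomial.eq_C_of_natDegree_eq_zero hdq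
  have hp : p = Polynomial.aeval (X 0 : P) (q.coeff 0) := by
    have := congrFun (congrArg DFunLike.coe rho_comp_psi) p
    simp only [AlgHom.coe_comp, Function.comp_apply, AlgHom.id_apply] at this
    rw [← this, ← hq, hqC]
    simp [rho]
  rw [hp, Algebra.adjoin_singleton_eq_range_aeval]
  exact ⟨q.coeff 0, rfl⟩
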